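/- arXiv:2001.04045 — 3 statements merged into one kernel-verified Lean document; each statement's English description precedes it below -/
import Mathlib

section
/- For every real p ≥ 0, lim_{n→∞} ( ∑_{j=0}^{n} C(2n, j) · (1+p)^j )^{1/(2n)} = 2·√(1+p), where C(m, k) denotes the binomial coefficient. Moreover 2√(1+p) ≤ 2+p with equality if and only if p = 0. -/
/-!
The terms `C(2n, j) x^j` with `j ≤ n` and `x ≥ 1` are each at most `C(2n, n) x^n`, the last of
them; so the lower-half sum lies between `C(2n, n) x^n` and `(n + 1) C(2n, n) x^n`. Since
`4^n / (2n + 1) ≤ C(2n, n) ≤ 4^n`, the sum is `(4x)^n` up to a factor `2n + 1`, which disappears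
under the `2n`-th root, leaving `√(4x) = 2√x`. The inequality `2√(1+p) ≤ 2 + p` is AM–GM for
`1` and `1 + p`.
-/

open Finset Filter Topology

noncomputable def lowerHalfBinomSum (x : ℝ) (n : ℕ) : ℝ :=
  ∑ j ∈ range (n + 1), ((2 * n).choose j : ℝ) * x ^ j

lemma tendsto_two_mul_add_one_rpow_one_div_two_mul :
    Tendsto (fun n : ℕ => (2 * (n : ℝ) + 1) ^ ((1 : ℝ) / (2 * n))) atTop (𝓝 1) := by
  have hlin : Tendsto (fun n : ℕ => 2 * (n : ℝ) + 1) atTop atTop :=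
    tendsto_atTop_add_const_right _ _
      (tendsto_natCast_atTop_atTop.const_mul_atTop two_pos)
  refine ((tendsto_rpow_div_mul_add 1 1 (-1) one_ne_zero.symm).comp hlin).congr fun n => ?_
  simp only [Function.comp_apply]
  ring_nf

lemma pow_rpow_one_div_two_mul {a : ℝ} (ha : 0 ≤ a) {n : ℕ} (hn : n ≠ 0) :
    (a ^ n) ^ ((1 : ℝ) / (2 * n)) = √a := by
  rw [← Real.rpow_natCast, ← Real.rpow_mul ha, Real.sqrt_eq_rpow]
  congr 1
  field_simp

lemma tendsto_rpow_one_div_two_mul_of_le_of_le {s : ℕ → ℝ} {a : ℝ} (ha : 0 ≤ a)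
    (hlow : ∀ n, a ^ n ≤ (2 * n + 1) * s n) (hup : ∀ n, s n ≤ (2 * n + 1) * a ^ n) :
    Tendsto (fun n : ℕ => s n ^ ((1 : ℝ) / (2 * n))) atTop (𝓝 √a) := by
  have hroot := tendsto_two_mul_add_one_rpow_one_div_two_mul
  have hlim_low : Tendsto (fun n : ℕ => √a / (2 * (n : ℝ) + 1) ^ ((1 : ℝ) / (2 * n))) atTop
      (𝓝 √a) := by
    have h := (tendsto_const_nhds (x := √a)).div hroot one_ne_zero
    rwa [div_one] at h
  have hlim_up : Tendsto (fun n : ℕ => (2 * (n : ℝ) + 1) ^ ((1 : ℝ) / (2 * n)) * √a) atTop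
      (𝓝 √a) := by
    simpa using hroot.mul_const √a
  refine tendsto_of_tendsto_of_tendsto_of_le_of_le' hlim_low hlim_up ?_ ?_ <;>
    filter_upwards [eventually_ne_atTop 0] with n hn
  · have hs : a ^ n / (2 * n + 1) ≤ s n := by
      rw [div_le_iff₀ (by positivity), mul_comm]
      exact hlow n
    calc √a / (2 * (n : ℝ) + 1) ^ ((1 : ℝ) / (2 * n))
        = (a ^ n / (2 * n + 1)) ^ ((1 : ℝ) / (2 * n)) := by
          rw [Real.div_rpow (by positivity) (by positivity), pow_rpow_one_div_two_mul ha hn]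
      _ ≤ s n ^ ((1 : ℝ) / (2 * n)) := by gcongr
  · have hs : 0 ≤ s n :=
      nonneg_of_mul_nonneg_right ((pow_nonneg ha n).trans (hlow n)) (by positivity)
    calc s n ^ ((1 : ℝ) / (2 * n))
        ≤ ((2 * n + 1) * a ^ n) ^ ((1 : ℝ) / (2 * n)) := by gcongr; exact hup n
      _ = (2 * (n : ℝ) + 1) ^ ((1 : ℝ) / (2 * n)) * √a := by
          rw [Real.mul_rpow (by positivity) (by positivity), pow_rpow_one_div_two_mul ha hn]

section lowerHalfBinomSum

variable {x : ℝ}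

lemma centralBinom_mul_pow_le_lowerHalfBinomSum (hx : 0 ≤ x) (n : ℕ) :
    (n.centralBinom : ℝ) * x ^ n ≤ lowerHalfBinomSum x n :=
  single_le_sum (f := fun j => ((2 * n).choose j : ℝ) * x ^ j) (fun _ _ => by positivity)
    (self_mem_range_succ n)

lemma lowerHalfBinomSum_le_succ_mul_centralBinom_mul_pow (hx : 1 ≤ x) (n : ℕ) :
    lowerHalfBinomSum x n ≤ (n + 1) * ((n.centralBinom : ℝ) * x ^ n) := by
  have hterm : ∀ j ∈ range (n + 1),
      ((2 * n).choose j : ℝ) * x ^ j ≤ (n.centralBinom : ℝ) * x ^ n := fun j hj => by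
    gcongr
    · exact_mod_cast Nat.choose_le_centralBinom j n
    · exact Nat.lt_succ_iff.mp (mem_range.mp hj)
  simpa [lowerHalfBinomSum] using sum_le_card_nsmul _ _ _ hterm

lemma four_mul_pow_le_lowerHalfBinomSum (hx : 0 ≤ x) (n : ℕ) :
    (4 * x) ^ n ≤ (2 * n + 1) * lowerHalfBinomSum x n := by
  have hcentral : (4 : ℝ) ^ n ≤ (2 * n + 1) * n.centralBinom := by
    exact_mod_cast Nat.four_pow_le_two_mul_add_one_mul_central_binom n
  calc (4 * x) ^ n = 4 ^ n * x ^ n := mul_pow _ _ _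
    _ ≤ (2 * n + 1) * n.centralBinom * x ^ n := by gcongr
    _ ≤ (2 * n + 1) * lowerHalfBinomSum x n := by
      rw [mul_assoc]
      gcongr
      exact centralBinom_mul_pow_le_lowerHalfBinomSum hx n

lemma lowerHalfBinomSum_le_four_mul_pow (hx : 1 ≤ x) (n : ℕ) :
    lowerHalfBinomSum x n ≤ (2 * n + 1) * (4 * x) ^ n := by
  have hcentral : (n.centralBinom : ℝ) ≤ 4 ^ n := by
    exact_mod_cast Nat.centralBinom_le_four_pow n
  calc lowerHalfBinomSum x n ≤ (n + 1) * ((n.centralBinom : ℝ) * x ^ n) :=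
        lowerHalfBinomSum_le_succ_mul_centralBinom_mul_pow hx n
    _ ≤ (2 * n + 1) * (4 ^ n * x ^ n) := by
      gcongr
      linarith [(n.cast_nonneg : (0 : ℝ) ≤ n)]
    _ = (2 * n + 1) * (4 * x) ^ n := by rw [mul_pow]

lemma tendsto_lowerHalfBinomSum_rpow (hx : 1 ≤ x) :
    Tendsto (fun n : ℕ => lowerHalfBinomSum x n ^ ((1 : ℝ) / (2 * n))) atTop
      (𝓝 (2 * √x)) := by
  have hsqrt : √(4 * x) = 2 * √x := by
    rw [Real.sqrt_mul zero_le_four, show (4 : ℝ) = 2 ^ 2 by norm_num,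
      Real.sqrt_sq zero_le_two]
  rw [← hsqrt]
  exact tendsto_rpow_one_div_two_mul_of_le_of_le (by linarith)
    (four_mul_pow_le_lowerHalfBinomSum (by linarith)) (lowerHalfBinomSum_le_four_mul_pow hx)

end lowerHalfBinomSum

lemma two_mul_sqrt_le_one_add {x : ℝ} (hx : 0 ≤ x) : 2 * √x ≤ 1 + x := by
  nlinarith [Real.sq_sqrt hx, sq_nonneg (√x - 1)]

lemma two_mul_sqrt_eq_one_add_iff {x : ℝ} (hx : 0 ≤ x) : 2 * √x = 1 + x ↔ x = 1 := by
  constructor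
  · intro h
    have hsqrt : √x = 1 := by nlinarith [Real.sq_sqrt hx, sq_nonneg (√x - 1)]
    rw [← Real.sq_sqrt hx, hsqrt, one_pow]
  · rintro rfl
    norm_num

/-- The exponential growth rate of the lower-half weighted binomial sum:
`(∑_{j=0}^n C(2n,j)(1+p)^j)^{1/(2n)} → 2√(1+p)` as `n → ∞`, and
`2√(1+p) ≤ 2+p` with equality iff `p = 0`. -/
theorem weighted_binomial_tail_growth_rate (p : ℝ) (hp : 0 ≤ p) :
    Tendsto
      (fun n : ℕ =>
        (∑ j ∈ range (n + 1), ((2 * n).choose j : ℝ) * (1 + p) ^ j)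
          ^ ((1 : ℝ) / (2 * (n : ℝ))))
      atTop (nhds (2 * Real.sqrt (1 + p))) ∧
    2 * Real.sqrt (1 + p) ≤ 2 + p ∧
    (2 * Real.sqrt (1 + p) = 2 + p ↔ p = 0) := by
  have hx : 0 ≤ 1 + p := by linarith
  refine ⟨tendsto_lowerHalfBinomSum_rpow (by linarith), ?_, ?_⟩
  · linarith [two_mul_sqrt_le_one_add hx]
  · rw [show 2 + p = 1 + (1 + p) by ring, two_mul_sqrt_eq_one_add_iff hx]
    constructor <;> intro h <;> linarith
end

section
/- Let λ > 0 and δλ > 0, and set p = δλ/λ. Define for t > 0: β(t) = e^{−(2λ+δλ)t} · ∑_{n=0}^{∞} ( (λt)^n / n! ) · ∑_{j=0}^{⌊n/2⌋} C(n, j) · (1+p)^j. Then there exists η > 0 such that β(t) ≤ e^{−η t} for all sufficiently large t; in particular β(t) → 0 as t → ∞. (This is the false negative rate at false positive rate 1/2 of the uniformly most powerful rate test applied to a control Poisson process of rate λ and a treatment Poisson process of rate λ + δλ, each observed for time t; thus the false negative rate goes to zero for any false positive rate as the observation time grows.) -/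
/-!
Bound the truncated binomial sum by `(2√(1+p))ⁿ`: for `j ≤ n/2` we have `(1+p)ʲ ≤ √(1+p)ⁿ` and
`∑ C(n,j) ≤ 2ⁿ`. The Poisson series is then at most `exp(2λt√(1+p))`, so
`β(t) ≤ exp(-(2λ + δλ - 2λ√(1+p)) t)`, and the rate is positive because
`(2λ√(1+p))² = 4λ² + 4λδλ < (2λ + δλ)²`.
-/

open Finset Filter

lemma sum_range_half_choose_mul_pow_le {x : ℝ} (hx : 1 ≤ x) (n : ℕ) :
    ∑ j ∈ range (n / 2 + 1), (n.choose j : ℝ) * x ^ j ≤ (2 * √x) ^ n := by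
  have hsqrt : 1 ≤ √x := Real.one_le_sqrt.2 hx
  calc ∑ j ∈ range (n / 2 + 1), (n.choose j : ℝ) * x ^ j
      ≤ ∑ j ∈ range (n / 2 + 1), (n.choose j : ℝ) * √x ^ n := by
        refine sum_le_sum fun j hj => mul_le_mul_of_nonneg_left ?_ (by positivity)
        rw [show x ^ j = √x ^ (2 * j) by rw [pow_mul, Real.sq_sqrt (by linarith)]]
        exact pow_le_pow_right₀ hsqrt (by have := mem_range.1 hj; omega)
    _ ≤ ∑ j ∈ range (n + 1), (n.choose j : ℝ) * √x ^ n :=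
        sum_le_sum_of_subset_of_nonneg (range_subset_range.2 (by omega))
          fun _ _ _ => by positivity
    _ = (2 * √x) ^ n := by
        rw [← sum_mul, mul_pow]
        exact_mod_cast congrArg (fun m : ℕ => (m : ℝ) * √x ^ n) (Nat.sum_range_choose n)

lemma tsum_pow_div_factorial_mul_le_exp {a : ℕ → ℝ} {c y : ℝ} (hy : 0 ≤ y)
    (ha₀ : ∀ n, 0 ≤ a n) (ha : ∀ n, a n ≤ c ^ n) :
    ∑' n : ℕ, y ^ n / n.factorial * a n ≤ Real.exp (c * y) := by
  have hle : ∀ n : ℕ, y ^ n / n.factorial * a n ≤ (c * y) ^ n / n.factorial := fun n => by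
    rw [mul_pow, mul_comm (c ^ n), mul_div_right_comm]
    exact mul_le_mul_of_nonneg_left (ha n) (by positivity)
  have hsum := Real.summable_pow_div_factorial (c * y)
  rw [Real.exp_eq_exp_ℝ, NormedSpace.exp_eq_tsum_div]
  exact (hsum.of_nonneg_of_le (fun n => mul_nonneg (by positivity) (ha₀ n)) hle).tsum_le_tsum
    hle hsum

lemma two_mul_mul_sqrt_one_add_div_lt {a b : ℝ} (ha : 0 < a) (hb : 0 < b) :
    2 * a * √(1 + b / a) < 2 * a + b := by
  have hsq : (2 * a * √(1 + b / a)) ^ 2 = 4 * a ^ 2 + 4 * a * b := by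
    rw [mul_pow, Real.sq_sqrt (by positivity)]
    field_simp
    ring
  exact lt_of_pow_lt_pow_left₀ 2 (by positivity) (by nlinarith)

lemma tendsto_zero_of_nonneg_of_le_exp_neg {f : ℝ → ℝ} {η : ℝ} (hη : 0 < η)
    (h₀ : ∀ᶠ t in atTop, 0 ≤ f t) (hle : ∀ᶠ t in atTop, f t ≤ Real.exp (-(η * t))) :
    Tendsto f atTop (nhds 0) :=
  tendsto_of_tendsto_of_tendsto_of_le_of_le' tendsto_const_nhds
    (Real.tendsto_exp_neg_atTop_nhds_zero.comp (tendsto_id.const_mul_atTop hη)) h₀ hle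

/-- The false negative rate (at false positive rate 1/2) of the uniformly most
powerful rate test comparing a Poisson process of rate `λ` with one of rate
`λ + δλ` (each observed for time `t`) decays exponentially: there is `η > 0` with
`β(t) ≤ e^{−ηt}` for all large `t`; in particular `β(t) → 0` as `t → ∞`. -/
theorem rate_test_fnr_tendsto_zero
    (lam dlam : ℝ) (hlam : 0 < lam) (hdlam : 0 < dlam)
    (p : ℝ) (hp : p = dlam / lam)
    (beta : ℝ → ℝ)
    (hbeta : ∀ t : ℝ, 0 < t → beta t =
      Real.exp (-((2 * lam + dlam) * t)) *
        ∑' n : ℕ, ((lam * t) ^ n / Nat.factorial n) *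
          ∑ j ∈ range (n / 2 + 1), (n.choose j : ℝ) * (1 + p) ^ j) :
    (∃ η : ℝ, 0 < η ∧ ∀ᶠ t in atTop, beta t ≤ Real.exp (-(η * t))) ∧
    Tendsto beta atTop (nhds 0) := by
  have hp₀ : 0 ≤ p := hp ▸ by positivity
  set η := 2 * lam + dlam - 2 * lam * √(1 + p)
  have hη : 0 < η := sub_pos.2 (hp ▸ two_mul_mul_sqrt_one_add_div_lt hlam hdlam)
  have hbound : ∀ᶠ t in atTop, 0 ≤ beta t ∧ beta t ≤ Real.exp (-(η * t)) := by
    filter_upwards [eventually_gt_atTop 0] with t ht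
    rw [hbeta t ht]
    refine ⟨by positivity, ?_⟩
    calc _ ≤ Real.exp (-((2 * lam + dlam) * t)) * Real.exp (2 * √(1 + p) * (lam * t)) :=
          mul_le_mul_of_nonneg_left (tsum_pow_div_factorial_mul_le_exp (by positivity)
            (fun n => by positivity) (sum_range_half_choose_mul_pow_le (by linarith)))
            (Real.exp_nonneg _)
      _ = Real.exp (-(η * t)) := by rw [← Real.exp_add]; congr 1; ring
  exact ⟨⟨η, hη, hbound.mono fun _ h => h.2⟩,
    tendsto_zero_of_nonneg_of_le_exp_neg hη (hbound.mono fun _ h => h.1)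
      (hbound.mono fun _ h => h.2)⟩
end

section
/- Let N₀ and N₁ be independent ℕ-valued random variables with pmfs f₀ and f₁, let l ≥ 1 be a natural number, and let g₀, g₁ be the pmfs of l·N₀ and l·N₁ (so g_i(j) = f_i(j/l) if l divides j and 0 otherwise). Then for every threshold function K : ℕ → ℕ, ∑_{m=0}^{∞} ∑_{j=0}^{min(l·K(m), l·m)} g₁(j) · g₀(l·m − j) = ∑_{m=0}^{∞} ∑_{k=0}^{min(K(m), m)} f₁(k) · f₀(m − k). Consequently, the false negative rate of the rate test applied to deterministically compounded processes l·N₀, l·N₁ with thresholds scaled by l equals the false negative rate of the rate test applied to N₀, N₁ with thresholds K; i.e., deterministic compounding leaves the false-negative/false-positive trade-off of the rate test exactly unchanged. -/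
open Finset

/-! Compounding by `l` only moves mass onto multiples of `l`, so in the compounded convolution
every term with `l ∤ j` vanishes; the surviving terms `j = l k` are exactly the terms of the
original convolution, and the scaled cut-off `min (l K) (l m) = l · min K m` keeps the same `k`. -/

theorem Finset.sum_range_mul_succ_eq_of_dvd {M : Type*} [AddCommMonoid M] {l : ℕ} (hl : 0 < l)
    (n : ℕ) {F : ℕ → M} (hF : ∀ j, ¬ l ∣ j → F j = 0) :
    ∑ j ∈ range (l * n + 1), F j = ∑ k ∈ range (n + 1), F (l * k) := by
  have hinj : Set.InjOn (l * ·) (range (n + 1) : Set ℕ) :=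
    fun _ _ _ _ h => Nat.eq_of_mul_eq_mul_left hl h
  rw [← sum_image hinj]
  symm
  refine sum_subset (fun j hj => ?_) fun j hj hj' => hF j ?_
  · obtain ⟨k, hk, rfl⟩ := mem_image.mp hj
    simp only [mem_range, Nat.lt_succ_iff] at hk ⊢
    exact Nat.mul_le_mul_left l hk
  · rintro ⟨k, rfl⟩
    refine hj' (mem_image.mpr ⟨k, ?_, rfl⟩)
    simp only [mem_range, Nat.lt_succ_iff] at hj ⊢
    exact Nat.le_of_mul_le_mul_left hj hl

section Compounding

variable {f g : ℕ → ℝ} {l : ℕ}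

theorem apply_mul_of_eq_compound (hl : 0 < l)
    (hg : ∀ j, g j = if l ∣ j then f (j / l) else 0) (k : ℕ) : g (l * k) = f k := by
  rw [hg, if_pos (dvd_mul_right l k), Nat.mul_div_cancel_left k hl]

theorem apply_eq_zero_of_eq_compound (hg : ∀ j, g j = if l ∣ j then f (j / l) else 0)
    {j : ℕ} (hj : ¬ l ∣ j) : g j = 0 := by
  rw [hg, if_neg hj]

end Compounding

/-- Deterministic compounding leaves the false-negative/false-positive trade-off of
the rate test unchanged: with `g_i` the pmfs of `l·N_i` (where `N_i` has pmf `f_i`),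
the false negative rate of the rate test on the compounded processes with thresholds
scaled by `l` equals that of the rate test on the original processes. -/
theorem deterministic_compounding_same_fnr
    (f0 f1 : ℕ → ℝ) (l : ℕ) (hl : 1 ≤ l)
    (g0 g1 : ℕ → ℝ)
    (hg0 : ∀ j : ℕ, g0 j = if l ∣ j then f0 (j / l) else 0)
    (hg1 : ∀ j : ℕ, g1 j = if l ∣ j then f1 (j / l) else 0)
    (K : ℕ → ℕ) :
    ∑' m : ℕ, ∑ j ∈ range (min (l * K m) (l * m) + 1), g1 j * g0 (l * m - j)
      = ∑' m : ℕ, ∑ k ∈ range (min (K m) m + 1), f1 k * f0 (m - k) := by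
  refine tsum_congr fun m => ?_
  rw [Nat.mul_min_mul_left, sum_range_mul_succ_eq_of_dvd hl _
    fun j hj => by rw [apply_eq_zero_of_eq_compound hg1 hj, zero_mul]]
  refine sum_congr rfl fun k _ => ?_
  rw [← Nat.mul_sub, apply_mul_of_eq_compound hl hg1, apply_mul_of_eq_compound hl hg0]
end
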